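/- Consider an instance of the MST problem under explorable uncertainty with unique T_L = T_U, and a cycle C_i for some i ∈ {1,…,l}. Let l_i ∈ C_i ∖ {f_i} be an edge such that I_{l_i} ∩ I_{f_i} ≠ ∅ and l_i has the largest upper limit in C_i ∖ {f_i}. Then {f_i, l_i} is a witness set; moreover, if the true value w_{f_i} lies in I_{l_i}, then l_i is mandatory. -/

import Mathlib

/-!
Common framework: the minimum spanning tree problem under explorable
uncertainty with (untrusted) predictions.
-/

open scoped BigOperators
open scoped Classical

noncomputable section

/-- An instance of the MST problem under explorable uncertainty with predictions:
a connected (multi)graph whose edges carry uncertainty intervals (open `(L,U)` for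
non-trivial edges, i.e. `L < U`, and the singleton `{L}` for trivial edges, i.e. `L = U`)
together with predicted values `pw e` lying in the intervals. -/
structure UncGraph where
  V : Type
  E : Type
  fintV : Fintype V
  fintE : Fintype E
  decV : DecidableEq V
  decE : DecidableEq E
  ends : E → Sym2 V
  conn : ∀ u v : V, Relation.ReflTransGen (fun a b => ∃ e : E, ends e = s(a, b)) u v
  L : E → ℝ
  U : E → ℝ
  LU : ∀ e, L e ≤ U e
  pw : E → ℝ
  pw_mem : ∀ e, (L e = U e ∧ pw e = L e) ∨ (L e < pw e ∧ pw e < U e)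

attribute [instance] UncGraph.fintV UncGraph.fintE UncGraph.decV UncGraph.decE

namespace UncGraph

variable (G : UncGraph)

/-- The uncertainty interval of an edge: the open interval `(L e, U e)` for a
non-trivial edge, the singleton `{L e}` for a trivial edge (`L e = U e`). -/
def I (e : G.E) : Set ℝ :=
  {x | (G.L e = G.U e ∧ x = G.L e) ∨ (G.L e < x ∧ x < G.U e)}

/-- A trivial edge: its interval is a singleton. -/
def TrivialEdge (e : G.E) : Prop := G.L e = G.U e

/-- A non-trivial edge: its interval is a nonempty open interval. -/
def NontrivialEdge (e : G.E) : Prop := G.L e < G.U e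

/-- `w` is a valid realization of true edge weights. -/
def Valid (w : G.E → ℝ) : Prop := ∀ e, w e ∈ G.I e

/-- Connectivity of two vertices using only edges from `S`. -/
def ConnectsVia (S : Finset G.E) (u v : G.V) : Prop :=
  Relation.ReflTransGen (fun a b => ∃ e ∈ S, G.ends e = s(a, b)) u v

/-- `S` is a spanning tree: it connects all vertices and has `|V| - 1` edges. -/
def IsSpanningTree (S : Finset G.E) : Prop :=
  (∀ u v : G.V, G.ConnectsVia S u v) ∧ S.card + 1 = Fintype.card G.V

/-- `T` is a minimum spanning tree with respect to the weight function `wf`. -/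
def IsMST (wf : G.E → ℝ) (T : Finset G.E) : Prop :=
  G.IsSpanningTree T ∧ ∀ T', G.IsSpanningTree T' → ∑ e ∈ T, wf e ≤ ∑ e ∈ T', wf e

/-- `wf` agrees with the true values `w` on the queried set `Q` and lies in the
uncertainty intervals elsewhere. -/
def Compatible (w : G.E → ℝ) (Q : Finset G.E) (wf : G.E → ℝ) : Prop :=
  (∀ e ∈ Q, wf e = w e) ∧ ∀ e, wf e ∈ G.I e

/-- The query set `Q` verifies `T`: `T` is an MST for every weight function
compatible with the revealed values. -/
def Verifies (w : G.E → ℝ) (Q T : Finset G.E) : Prop :=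
  ∀ wf, G.Compatible w Q wf → G.IsMST wf T

/-- `Q` is a feasible query set for true values `w`. -/
def Feasible (w : G.E → ℝ) (Q : Finset G.E) : Prop :=
  ∃ T, G.Verifies w Q T

/-- The minimum cardinality of a feasible query set. -/
def optCost (w : G.E → ℝ) : ℕ :=
  sInf {n | ∃ Q, G.Feasible w Q ∧ Q.card = n}

/-- `Q` is an optimal (minimum-cardinality feasible) query set. -/
def IsOptimal (w : G.E → ℝ) (Q : Finset G.E) : Prop :=
  G.Feasible w Q ∧ ∀ Q', G.Feasible w Q' → Q.card ≤ Q'.card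

/-- An edge is mandatory if it belongs to every feasible query set. -/
def Mandatory (w : G.E → ℝ) (e : G.E) : Prop :=
  ∀ Q, G.Feasible w Q → e ∈ Q

/-- A witness set intersects every feasible query set. -/
def IsWitnessSet (w : G.E → ℝ) (W : Finset G.E) : Prop :=
  ∀ Q, G.Feasible w Q → ∃ e ∈ W, e ∈ Q

/-- An edge is prediction mandatory if it is mandatory under the assumption that
all queries return the predicted values. -/
def PredMandatory (e : G.E) : Prop := G.Mandatory G.pw e

/-- An instance is prediction mandatory free if it has no prediction mandatory edge. -/
def PredMandatoryFree : Prop := ∀ e, ¬ G.PredMandatory e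

/-- Hop-distance indicator `k_{e'}(e)`: `0` if the prediction `p e` has the same
relation to the interval `I e'` as the true value `w e` (both `≤ L e'`, both
`≥ U e'`, or both strictly inside), and `1` otherwise. -/
def kErr (p w : G.E → ℝ) (e e' : G.E) : ℕ :=
  if (p e ≤ G.L e' ∧ w e ≤ G.L e') ∨ (G.U e' ≤ p e ∧ G.U e' ≤ w e) ∨
      (G.L e' < p e ∧ p e < G.U e' ∧ G.L e' < w e ∧ w e < G.U e')
  then 0 else 1

/-- `h→(e) = Σ_{e' ≠ e} k_{e'}(e)`. -/
def hright (p w : G.E → ℝ) (e : G.E) : ℕ :=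
  ∑ e' ∈ Finset.univ.erase e, G.kErr p w e e'

/-- `h←(e) = Σ_{e' ≠ e} k_e(e')`. -/
def hleft (p w : G.E → ℝ) (e : G.E) : ℕ :=
  ∑ e' ∈ Finset.univ.erase e, G.kErr p w e' e

/-- `h→(E') = Σ_{e ∈ E'} h→(e)`. -/
def hrightSum (p w : G.E → ℝ) (S : Finset G.E) : ℕ := ∑ e ∈ S, G.hright p w e

/-- `h←(E') = Σ_{e ∈ E'} h←(e)`. -/
def hleftSum (p w : G.E → ℝ) (S : Finset G.E) : ℕ := ∑ e ∈ S, G.hleft p w e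

/-- The hop distance of prediction `p` for realization `w`. -/
def hopDist (p w : G.E → ℝ) : ℕ := ∑ e, G.hright p w e

/-- The hop distance `k_h` of the instance's predictions for realization `w`. -/
def khop (w : G.E → ℝ) : ℕ := G.hopDist G.pw w

/-- Lower-limit weights `w^L`: `L e + ε` for non-trivial edges, the known value
for trivial edges. -/
def lowerWeight (ε : ℝ) (e : G.E) : ℝ := if G.L e = G.U e then G.L e else G.L e + ε

/-- Upper-limit weights `w^U`: `U e - ε` for non-trivial edges, the known value
for trivial edges. -/
def upperWeight (ε : ℝ) (e : G.E) : ℝ := if G.L e = G.U e then G.L e else G.U e - ε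

/-- `T` is a lower limit tree: an MST for `w^L` for all sufficiently small `ε > 0`. -/
def IsLowerLimitTree (T : Finset G.E) : Prop :=
  ∃ ε₀ > (0 : ℝ), ∀ ε : ℝ, 0 < ε → ε < ε₀ → G.IsMST (G.lowerWeight ε) T

/-- `T` is an upper limit tree: an MST for `w^U` for all sufficiently small `ε > 0`. -/
def IsUpperLimitTree (T : Finset G.E) : Prop :=
  ∃ ε₀ > (0 : ℝ), ∀ ε : ℝ, 0 < ε → ε < ε₀ → G.IsMST (G.upperWeight ε) T

/-- `T` is simultaneously the unique lower limit tree and the unique upper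
limit tree (`T_L = T_U`, both unique). -/
def UniqueLimitTrees (T : Finset G.E) : Prop :=
  G.IsLowerLimitTree T ∧ G.IsUpperLimitTree T ∧
  (∀ T', G.IsLowerLimitTree T' → T' = T) ∧
  (∀ T', G.IsUpperLimitTree T' → T' = T)

/-- Number of edge-ends of `S` incident to `v` (loops count twice). -/
def incCount (S : Finset G.E) (v : G.V) : ℕ :=
  ∑ e ∈ S, (if G.ends e = s(v, v) then 2 else if v ∈ G.ends e then 1 else 0)

/-- `S` forms a single cycle: nonempty, every vertex has degree `0` or `2`,
and the support is connected. -/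
def IsCycle (S : Finset G.E) : Prop :=
  S.Nonempty ∧ (∀ v, G.incCount S v = 0 ∨ G.incCount S v = 2) ∧
  ∀ u v, G.incCount S u ≠ 0 → G.incCount S v ≠ 0 → G.ConnectsVia S u v

/-- `C` is the cycle closed by adding the edge `f` to the tree `T`. -/
def IsCycleOf (T : Finset G.E) (f : G.E) (C : Finset G.E) : Prop :=
  G.IsCycle C ∧ f ∈ C ∧ C ⊆ insert f T

/-- `e'` lies in the cut `X_e` between the two components of `T \ {e}`. -/
def InCut (T : Finset G.E) (e e' : G.E) : Prop :=
  ∀ u v : G.V, G.ends e' = s(u, v) → ¬ G.ConnectsVia (T.erase e) u v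

/-- `S` is a path between the (distinct) vertices `a` and `b`. -/
def IsPathBetween (S : Finset G.E) (a b : G.V) : Prop :=
  a ≠ b ∧ G.incCount S a = 1 ∧ G.incCount S b = 1 ∧
  (∀ v, v ≠ a → v ≠ b → G.incCount S v = 0 ∨ G.incCount S v = 2) ∧
  ∀ v, G.incCount S v ≠ 0 → G.ConnectsVia S a v

/-- `{f, l}` is an edge of the vertex cover instance `Ḡ` (w.r.t. the tree `T`):
`f ∉ T`, `l ≠ f` lies on the cycle closed by `f`, both are non-trivial, and
their intervals intersect. -/
def VCEdge (T : Finset G.E) (f l : G.E) : Prop :=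
  f ∉ T ∧ l ≠ f ∧ G.NontrivialEdge f ∧ G.NontrivialEdge l ∧
  (∃ C, G.IsCycleOf T f C ∧ l ∈ C) ∧ (G.I f ∩ G.I l).Nonempty

/-- Adjacency in the vertex cover instance `Ḡ` (symmetrized). -/
def VCAdj (T : Finset G.E) (a b : G.E) : Prop := G.VCEdge T a b ∨ G.VCEdge T b a

/-- `S` is a vertex cover of the vertex cover instance `Ḡ`. -/
def IsVCCover (T S : Finset G.E) : Prop :=
  ∀ a b, G.VCAdj T a b → a ∈ S ∨ b ∈ S

/-- `S` is a minimum vertex cover of the vertex cover instance `Ḡ`. -/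
def IsMinVC (T S : Finset G.E) : Prop :=
  G.IsVCCover T S ∧ ∀ S', G.IsVCCover T S' → S.card ≤ S'.card

/-- Edge `e` does not occur in the instance anymore: independently of the
remaining uncertainty it can be deleted (some MST avoids it, for every
realization) or contracted (some MST contains it, for every realization). -/
def Removable (e : G.E) : Prop :=
  (∀ wf : G.E → ℝ, (∀ e', wf e' ∈ G.I e') → ∃ T, G.IsMST wf T ∧ e ∉ T) ∨
  (∀ wf : G.E → ℝ, (∀ e', wf e' ∈ G.I e') → ∃ T, G.IsMST wf T ∧ e ∈ T)

end UncGraph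

/-- The instance obtained from `G` by querying the edges of `Q` under true
values `w`: the intervals of queried edges collapse to the revealed values. -/
def UncGraph.restrict (G : UncGraph) (w : G.E → ℝ) (Q : Finset G.E) : UncGraph where
  V := G.V
  E := G.E
  fintV := G.fintV
  fintE := G.fintE
  decV := G.decV
  decE := G.decE
  ends := G.ends
  conn := G.conn
  L := fun e => if e ∈ Q then w e else G.L e
  U := fun e => if e ∈ Q then w e else G.U e
  LU := fun e => by by_cases h : e ∈ Q <;> simp [h, G.LU e]
  pw := fun e => if e ∈ Q then w e else G.pw e
  pw_mem := fun e => by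
    by_cases h : e ∈ Q
    · simp [h]
    · simpa [h] using G.pw_mem e

/-- A deterministic adaptive query algorithm: given the instance and the set of
already queried edges together with the revealed values, it either picks the next
edge to query or stops (`none`).  The lawfulness condition states that the
decision may only depend on the revealed values of already queried edges. -/
structure Algorithm where
  next : ∀ G : UncGraph, Finset G.E → (G.E → ℝ) → Option G.E
  lawful : ∀ (G : UncGraph) (Q : Finset G.E) (w w' : G.E → ℝ),
    (∀ e ∈ Q, w e = w' e) → next G Q w = next G Q w'

namespace Algorithm

/-- The set of edges queried by `A` after `n` steps, on instance `G` with true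
values `w`; the algorithm stops as soon as the queried set is feasible. -/
def runQueries (A : Algorithm) (G : UncGraph) (w : G.E → ℝ) : ℕ → Finset G.E
  | 0 => ∅
  | n + 1 =>
    let Q := A.runQueries G w n
    if G.Feasible w Q then Q
    else
      match A.next G Q w with
      | some e => insert e Q
      | none => Q

/-- The final query set of the run of `A`. -/
def finalQueries (A : Algorithm) (G : UncGraph) (w : G.E → ℝ) : Finset G.E :=
  A.runQueries G w (Fintype.card G.E + 1)

/-- The number of queries made by `A` on instance `G` with true values `w`. -/
def algCost (A : Algorithm) (G : UncGraph) (w : G.E → ℝ) : ℕ :=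
  (A.finalQueries G w).card

/-- `A` solves every instance: it always ends with a feasible query set. -/
def Solves (A : Algorithm) : Prop :=
  ∀ (G : UncGraph) (w : G.E → ℝ), G.Valid w → G.Feasible w (A.finalQueries G w)

/-- `A` is `α`-consistent: on instances with correct predictions it makes at
most `α · |OPT|` queries. -/
def Consistent (A : Algorithm) (α : ℝ) : Prop :=
  ∀ G : UncGraph, (A.algCost G G.pw : ℝ) ≤ α * (G.optCost G.pw : ℝ)

/-- `A` is `β`-robust: it makes at most `β · |OPT|` queries on every instance. -/
def Robust (A : Algorithm) (β : ℝ) : Prop :=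
  ∀ (G : UncGraph) (w : G.E → ℝ), G.Valid w → (A.algCost G w : ℝ) ≤ β * (G.optCost w : ℝ)

/-- Run of a preprocessing algorithm: it stops exactly when `next` returns
`none` (rather than when the queried set is feasible). -/
def runPre (A : Algorithm) (G : UncGraph) (w : G.E → ℝ) : ℕ → Finset G.E
  | 0 => ∅
  | n + 1 =>
    let Q := A.runPre G w n
    match A.next G Q w with
    | some e => insert e Q
    | none => Q

/-- The final query set of a preprocessing run of `A`. -/
def preQueries (A : Algorithm) (G : UncGraph) (w : G.E → ℝ) : Finset G.E :=
  A.runPre G w (Fintype.card G.E + 1)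

end Algorithm

/-!
If a feasible query set `Q` misses `l`, give `f` a value `x ∈ I_f ∩ I_l` (its true value if
`f ∈ Q`). Since `T` is the unique lower limit tree, every value of an edge crossing the cut of a
tree edge `e` exceeds `L_e`. Hence `l` is non-trivial, the other edges of `C ∖ {f}` take values
below `U_l` (the trivial ones lie below `x`), and the edges across the cut of `l` take values above
`L_l`. So `l` can be made the strict maximum of `C`, which excludes it from every MST, or the strict
minimum of its cut, which forces it into every MST: `Q` verifies no tree.
-/

theorem Finset.sum_insert_erase_of_notMem {ι M : Type*} [DecidableEq ι] [AddCommGroup M]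
    (φ : ι → M) {s : Finset ι} {i j : ι} (hi : i ∉ s) (hj : j ∈ s) :
    ∑ x ∈ insert i (s.erase j), φ x = ∑ x ∈ s, φ x + φ i - φ j := by
  rw [Finset.sum_insert (fun h => hi (Finset.mem_of_mem_erase h)), Finset.sum_erase_eq_sub hj]
  abel

namespace UncGraph

variable {G : UncGraph}

section Connectivity

variable {S S' R : Finset G.E} {u v x y p q : G.V} {e g : G.E}

theorem ConnectsVia.refl (S : Finset G.E) (u : G.V) : G.ConnectsVia S u u :=
  Relation.ReflTransGen.refl

theorem ConnectsVia.trans (h : G.ConnectsVia S u v) (h' : G.ConnectsVia S v x) :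
    G.ConnectsVia S u x :=
  Relation.ReflTransGen.trans h h'

theorem ConnectsVia.mono (hS : S ⊆ S') (h : G.ConnectsVia S u v) : G.ConnectsVia S' u v :=
  Relation.ReflTransGen.mono (fun _ _ ⟨e, he, hab⟩ => ⟨e, hS he, hab⟩) _ _ h

theorem connectsVia_of_mem (he : e ∈ S) (hends : G.ends e = s(u, v)) : G.ConnectsVia S u v :=
  Relation.ReflTransGen.single ⟨e, he, hends⟩

theorem ConnectsVia.symm (h : G.ConnectsVia S u v) : G.ConnectsVia S v u := by
  induction h with
  | refl => exact .refl _ _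
  | tail _ hbc ih =>
    obtain ⟨e, he, hab⟩ := hbc
    exact (connectsVia_of_mem he (by rw [hab, Sym2.eq_swap])).trans ih

theorem exists_ends (e : G.E) : ∃ p q : G.V, G.ends e = s(p, q) := by
  induction G.ends e using Sym2.ind with
  | h p q => exact ⟨p, q, rfl⟩

theorem ConnectsVia.erase_or (hg : G.ends g = s(p, q)) (h : G.ConnectsVia S x y) :
    G.ConnectsVia (S.erase g) x y ∨
      (G.ConnectsVia (S.erase g) x p ∧ G.ConnectsVia (S.erase g) q y) ∨
      (G.ConnectsVia (S.erase g) x q ∧ G.ConnectsVia (S.erase g) p y) := by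
  induction h with
  | refl => exact Or.inl (.refl _ _)
  | @tail b c _ hbc ih =>
    obtain ⟨e, heS, hends⟩ := hbc
    by_cases heg : e = g
    · subst heg
      rw [hg, Sym2.eq_iff] at hends
      rcases hends with ⟨rfl, rfl⟩ | ⟨rfl, rfl⟩ <;>
        rcases ih with h1 | ⟨h1, h2⟩ | ⟨h1, h2⟩
      · exact Or.inr (Or.inl ⟨h1, .refl _ _⟩)
      · exact Or.inl (h1.trans h2.symm)
      · exact Or.inl h1
      · exact Or.inr (Or.inr ⟨h1, .refl _ _⟩)
      · exact Or.inl h1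
      · exact Or.inl (h1.trans h2.symm)
    · have hstep : G.ConnectsVia (S.erase g) b c :=
        connectsVia_of_mem (Finset.mem_erase.2 ⟨heg, heS⟩) hends
      rcases ih with h1 | ⟨h1, h2⟩ | ⟨h1, h2⟩
      · exact Or.inl (h1.trans hstep)
      · exact Or.inr (Or.inl ⟨h1, h2.trans hstep⟩)
      · exact Or.inr (Or.inr ⟨h1, h2.trans hstep⟩)

theorem ConnectsVia.mono_of_connectsVia_ends (h : G.ConnectsVia S x y) (hg : G.ends g = s(p, q))
    (hS : S.erase g ⊆ S') (hpq : G.ConnectsVia S' p q) : G.ConnectsVia S' x y := by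
  rcases h.erase_or hg with h1 | ⟨h1, h2⟩ | ⟨h1, h2⟩
  · exact h1.mono hS
  · exact (h1.mono hS).trans (hpq.trans (h2.mono hS))
  · exact (h1.mono hS).trans (hpq.symm.trans (h2.mono hS))

theorem ConnectsVia.exists_not_connectsVia_ends (h : G.ConnectsVia S u v)
    (hR : ¬ G.ConnectsVia R u v) :
    ∃ g ∈ S, ∃ a b, G.ends g = s(a, b) ∧ ¬ G.ConnectsVia R a b := by
  by_contra! hall
  exact hR (Relation.ReflTransGen.lift' id (fun a b ⟨g, hg, hab⟩ => hall g hg a b hab) _ _ h)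

theorem inCut_of_ends {T : Finset G.E} {e : G.E} (hg : G.ends g = s(p, q))
    (hpq : ¬ G.ConnectsVia (T.erase e) p q) : G.InCut T e g := by
  intro a b hab hcon
  rw [hg, Sym2.eq_iff] at hab
  rcases hab with ⟨rfl, rfl⟩ | ⟨rfl, rfl⟩
  · exact hpq hcon
  · exact hpq hcon.symm

theorem InCut.notMem {T : Finset G.E} {e : G.E} (h : G.InCut T e g) (hge : g ≠ e) : g ∉ T := by
  intro hgT
  obtain ⟨a, b, hab⟩ := exists_ends g
  exact h a b hab (connectsVia_of_mem (Finset.mem_erase.2 ⟨hge, hgT⟩) hab)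

end Connectivity

section SpanningTrees

variable {S : Finset G.E} {u v a b : G.V} {e g : G.E}

theorem card_le_card_add_one_of_connectsVia (h : ∀ u v, G.ConnectsVia S u v) :
    Fintype.card G.V ≤ S.card + 1 := by
  rcases isEmpty_or_nonempty G.V with hV | hV
  · simp
  let H := SimpleGraph.fromEdgeSet (G.ends '' (S : Set G.E))
  have hH : H.Connected := by
    refine ⟨fun u v => (SimpleGraph.reachable_iff_reflTransGen u v).2 ?_⟩
    refine Relation.ReflTransGen.lift' id (fun a b ⟨e, he, hab⟩ => ?_) _ _ (h u v)
    by_cases hne : a = b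
    · exact hne ▸ .refl
    · exact .single ((SimpleGraph.fromEdgeSet_adj _).2 ⟨⟨e, he, hab⟩, hne⟩)
  have hedges : Nat.card H.edgeSet ≤ S.card :=
    calc Nat.card H.edgeSet ≤ Nat.card (G.ends '' (S : Set G.E)) :=
          Nat.card_mono (Set.toFinite _) (by simp [H, SimpleGraph.edgeSet_fromEdgeSet])
      _ ≤ S.card := by
          rw [Nat.card_coe_set_eq, ← Set.ncard_coe_finset S]
          exact Set.ncard_image_le (Finset.finite_toSet S)
  have := hH.card_vert_le_card_edgeSet_add_one
  rw [Nat.card_eq_fintype_card] at this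
  omega

theorem IsSpanningTree.not_connectsVia_erase (hS : G.IsSpanningTree S) (hg : g ∈ S)
    (hab : G.ends g = s(a, b)) : ¬ G.ConnectsVia (S.erase g) a b := by
  intro h
  have := card_le_card_add_one_of_connectsVia fun u v =>
    (hS.1 u v).mono_of_connectsVia_ends hab subset_rfl h
  have := Finset.card_erase_add_one hg
  have := hS.2
  omega

theorem IsSpanningTree.exchange (hS : G.IsSpanningTree S) (hg : g ∈ S) (hcut : G.InCut S g e) :
    G.IsSpanningTree (insert e (S.erase g)) := by
  obtain ⟨p, q, hpq⟩ := exists_ends g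
  obtain ⟨u, v, huv⟩ := exists_ends e
  have hsub : S.erase g ⊆ insert e (S.erase g) := Finset.subset_insert _ _
  have he : G.ConnectsVia (insert e (S.erase g)) u v :=
    connectsVia_of_mem (Finset.mem_insert_self _ _) huv
  have hpq' : G.ConnectsVia (insert e (S.erase g)) p q := by
    rcases (hS.1 u v).erase_or hpq with h | ⟨h1, h2⟩ | ⟨h1, h2⟩
    · exact absurd h (hcut u v huv)
    · exact (h1.mono hsub).symm.trans (he.trans (h2.mono hsub).symm)
    · exact (h2.mono hsub).trans (he.symm.trans (h1.mono hsub))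
  have heS : e ∉ S.erase g := fun he' => hcut u v huv (connectsVia_of_mem he' huv)
  refine ⟨fun x y => (hS.1 x y).mono_of_connectsVia_ends hpq hsub hpq', ?_⟩
  rw [Finset.card_insert_of_notMem heS, Finset.card_erase_add_one hg]
  exact hS.2

theorem IsSpanningTree.exists_bridge_not_connectsVia (hS : G.IsSpanningTree S) {R : Finset G.E}
    (hR : ¬ G.ConnectsVia R u v) :
    ∃ g ∈ S, (∃ a b, G.ends g = s(a, b) ∧ ¬ G.ConnectsVia R a b) ∧
      ¬ G.ConnectsVia (S.erase g) u v := by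
  -- Every walk in a smallest `P ⊆ S` joining `u` and `v` uses the `R`-crossing edge `g`, so a
  -- walk in `S \ {g}` from `u` to `v` would close a cycle through `g`.
  obtain ⟨P, hP, hmin⟩ := Finset.exists_min_image
    (S.powerset.filter fun P => G.ConnectsVia P u v) Finset.card ⟨S, by simp [hS.1 u v]⟩
  rw [Finset.mem_filter, Finset.mem_powerset] at hP
  obtain ⟨g, hgP, a, b, hab, hnab⟩ := hP.2.exists_not_connectsVia_ends hR
  refine ⟨g, hP.1 hgP, ⟨a, b, hab, hnab⟩, fun hSg => ?_⟩
  have hPg : ¬ G.ConnectsVia (P.erase g) u v := fun h => by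
    have := hmin _ (Finset.mem_filter.2
      ⟨Finset.mem_powerset.2 ((Finset.erase_subset g P).trans hP.1), h⟩)
    have := Finset.card_erase_lt_of_mem hgP
    omega
  have hsub : P.erase g ⊆ S.erase g := Finset.erase_subset_erase g hP.1
  apply hS.not_connectsVia_erase (hP.1 hgP) hab
  rcases hP.2.erase_or hab with h | ⟨h1, h2⟩ | ⟨h1, h2⟩
  · exact absurd h hPg
  · exact (h1.mono hsub).symm.trans (hSg.trans (h2.mono hsub).symm)
  · exact (h2.mono hsub).trans (hSg.symm.trans (h1.mono hsub))

end SpanningTrees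

section Cycles

variable {T C : Finset G.E} {u v p q : G.V} {e f l : G.E}

theorem sum_incidence_eq (A : Finset G.V) (hpq : G.ends e = s(p, q)) :
    ∑ x ∈ A, (if G.ends e = s(x, x) then 2 else if x ∈ G.ends e then 1 else 0) =
      (if p ∈ A then 1 else 0) + (if q ∈ A then 1 else 0) := by
  have hx : ∀ x : G.V, (if s(p, q) = s(x, x) then 2 else if x ∈ s(p, q) then 1 else 0) =
      (if x = p then 1 else 0) + (if x = q then 1 else 0) := by
    intro x
    by_cases hxp : x = p <;> by_cases hxq : x = q <;> simp [hxp, hxq] <;> grind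
  simp only [hpq, hx, Finset.sum_add_distrib, Finset.sum_ite_eq']

/-- Degree parity: if `v` were not reached from `u` in `C \ {e}`, the `C`-degrees over the
component of `u` would sum to an odd number, since `e` contributes one end to it. -/
theorem IsCycle.connectsVia_erase (hC : G.IsCycle C) (he : e ∈ C) (huv : G.ends e = s(u, v)) :
    G.ConnectsVia (C.erase e) u v := by
  by_contra huv'
  set A := Finset.univ.filter (G.ConnectsVia (C.erase e) u)
  have hu : u ∈ A := by simp [A, ConnectsVia.refl]
  have hv : v ∉ A := by simpa [A] using huv'
  have hrest : ∀ e' ∈ C.erase e, 2 ∣ ∑ x ∈ A,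
      (if G.ends e' = s(x, x) then 2 else if x ∈ G.ends e' then 1 else 0) := by
    intro e' he'
    obtain ⟨p, q, hpq⟩ := exists_ends e'
    have hstep := connectsVia_of_mem he' hpq
    have hpqA : p ∈ A ↔ q ∈ A := by
      simp only [A, Finset.mem_filter, Finset.mem_univ, true_and]
      exact ⟨fun h => h.trans hstep, fun h => h.trans hstep.symm⟩
    rw [sum_incidence_eq A hpq]
    by_cases hp : p ∈ A <;> simp [hp, ← hpqA]
  have hsplit : ∑ x ∈ A, G.incCount C x = ∑ e' ∈ C.erase e, ∑ x ∈ A,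
      (if G.ends e' = s(x, x) then 2 else if x ∈ G.ends e' then 1 else 0) + ∑ x ∈ A,
      (if G.ends e = s(x, x) then 2 else if x ∈ G.ends e then 1 else 0) := by
    unfold incCount
    rw [Finset.sum_comm, Finset.sum_erase_add _ _ he]
  have heven : 2 ∣ ∑ x ∈ A, G.incCount C x :=
    Finset.dvd_sum fun x _ => by rcases hC.2.1 x with h | h <;> simp [h]
  rw [hsplit, sum_incidence_eq A huv, if_pos hu, if_neg hv] at heven
  have := Finset.dvd_sum hrest
  omega

theorem IsCycleOf.inCut (hT : G.IsSpanningTree T) (hC : G.IsCycleOf T f C) (hl : l ∈ C)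
    (hlf : l ≠ f) : G.InCut T l f := by
  intro a b hab hcon
  obtain ⟨p, q, hpq⟩ := exists_ends l
  have hlT : l ∈ T := (Finset.mem_insert.1 (hC.2.2 hl)).resolve_left hlf
  have hsub : C.erase l ⊆ insert f (T.erase l) := by
    intro x hx
    rw [Finset.mem_erase] at hx
    rcases Finset.mem_insert.1 (hC.2.2 hx.2) with rfl | h
    · exact Finset.mem_insert_self _ _
    · exact Finset.mem_insert_of_mem (Finset.mem_erase.2 ⟨hx.1, h⟩)
  refine hT.not_connectsVia_erase hlT hpq ?_
  exact ((hC.1.connectsVia_erase hl hpq).mono hsub).mono_of_connectsVia_ends hab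
    (Finset.erase_insert_subset _ _) hcon

end Cycles

section MST

variable {wf : G.E → ℝ} {T T' C : Finset G.E} {e g : G.E}

theorem IsMST.le_of_inCut (hT : G.IsMST wf T) (hg : g ∈ T) (hcut : G.InCut T g e) :
    wf g ≤ wf e := by
  rcases eq_or_ne e g with rfl | hne
  · rfl
  have := hT.2 _ (hT.1.exchange hg hcut)
  rw [Finset.sum_insert_erase_of_notMem wf (hcut.notMem hne) hg] at this
  linarith

theorem IsMST.notMem_of_forall_lt (hT : G.IsMST wf T) (hC : G.IsCycle C) (he : e ∈ C)
    (hmax : ∀ e' ∈ C, e' ≠ e → wf e' < wf e) : e ∉ T := by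
  intro heT
  obtain ⟨u, v, huv⟩ := exists_ends e
  obtain ⟨g, hgC, a, b, hab, hnab⟩ := (hC.connectsVia_erase he huv).exists_not_connectsVia_ends
    (hT.1.not_connectsVia_erase heT huv)
  rw [Finset.mem_erase] at hgC
  exact (hmax g hgC.2 hgC.1).not_ge (hT.le_of_inCut heT (inCut_of_ends hab hnab))

theorem IsMST.mem_of_forall_lt (hT' : G.IsMST wf T') (hT : G.IsSpanningTree T) (he : e ∈ T)
    (hmin : ∀ g, g ≠ e → G.InCut T e g → wf e < wf g) : e ∈ T' := by
  by_contra heT'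
  obtain ⟨u, v, huv⟩ := exists_ends e
  obtain ⟨g, hgT', ⟨a, b, hab, hnab⟩, hsep⟩ :=
    hT'.1.exists_bridge_not_connectsVia (hT.not_connectsVia_erase he huv)
  exact (hmin g (ne_of_mem_of_not_mem hgT' heT') (inCut_of_ends hab hnab)).not_ge
    (hT'.le_of_inCut hgT' (inCut_of_ends huv hsep))

end MST

section LimitTrees

variable {T : Finset G.E} {e g : G.E} {x y ε : ℝ}

theorem mem_I_iff_of_lt (h : G.L e < G.U e) : x ∈ G.I e ↔ G.L e < x ∧ x < G.U e := by
  simp [I, h.ne]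

theorem eq_L_of_mem_I (h : G.L e = G.U e) (hx : x ∈ G.I e) : x = G.L e := by
  rcases hx with ⟨_, hx⟩ | ⟨h1, h2⟩
  · exact hx
  · linarith

theorem lowerWeight_of_eq (h : G.L e = G.U e) : G.lowerWeight ε e = G.L e := if_pos h

theorem lowerWeight_of_ne (h : G.L e ≠ G.U e) : G.lowerWeight ε e = G.L e + ε := if_neg h

theorem L_le_lowerWeight (hε : 0 ≤ ε) : G.L e ≤ G.lowerWeight ε e := by
  unfold lowerWeight
  split_ifs <;> linarith

theorem IsLowerLimitTree.isSpanningTree (hT : G.IsLowerLimitTree T) : G.IsSpanningTree T :=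
  let ⟨ε₀, hε₀, hMST⟩ := hT
  (hMST (ε₀ / 2) (by linarith) (by linarith)).1

theorem IsLowerLimitTree.lowerWeight_le (hT : G.IsLowerLimitTree T) (he : e ∈ T)
    (hcut : G.InCut T e g) :
    ∃ ε₀ > (0 : ℝ), ∀ ε : ℝ, 0 < ε → ε < ε₀ → G.lowerWeight ε e ≤ G.lowerWeight ε g :=
  let ⟨ε₀, hε₀, hMST⟩ := hT
  ⟨ε₀, hε₀, fun ε h₀ h₁ => (hMST ε h₀ h₁).le_of_inCut he hcut⟩

theorem IsLowerLimitTree.exchange (hT : G.IsLowerLimitTree T) (he : e ∈ T) (hg : g ∉ T)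
    (hcut : G.InCut T e g) (heq : ∀ ε, G.lowerWeight ε e = G.lowerWeight ε g) :
    G.IsLowerLimitTree (insert g (T.erase e)) := by
  obtain ⟨ε₀, hε₀, hMST⟩ := hT
  refine ⟨ε₀, hε₀, fun ε h₀ h₁ => ⟨(hMST ε h₀ h₁).1.exchange he hcut, fun T' hT' => ?_⟩⟩
  rw [Finset.sum_insert_erase_of_notMem _ hg he, heq, add_sub_cancel_right]
  exact (hMST ε h₀ h₁).2 T' hT'

/-- A tie `L e = L g` between two trivial edges would make `insert g (T.erase e)` a second lower
limit tree. -/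
theorem L_lt_of_inCut (hT : G.IsLowerLimitTree T)
    (huniq : ∀ T', G.IsLowerLimitTree T' → T' = T) (he : e ∈ T) (hg : g ∉ T)
    (hcut : G.InCut T e g) (hy : y ∈ G.I g) : G.L e < y := by
  obtain ⟨ε₀, hε₀, hle⟩ := hT.lowerWeight_le he hcut
  by_cases hgt : G.L g = G.U g
  · obtain rfl := eq_L_of_mem_I hgt hy
    have hlw : G.lowerWeight (ε₀ / 2) e ≤ G.L g := by
      simpa [lowerWeight_of_eq hgt] using hle (ε₀ / 2) (by linarith) (by linarith)
    rcases ((L_le_lowerWeight (by linarith)).trans hlw).lt_or_eq with hlt | heq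
    · exact hlt
    by_cases het : G.L e = G.U e
    · refine absurd ?_ hg
      rw [← huniq _ (hT.exchange he hg hcut fun ε => by
        rw [lowerWeight_of_eq het, lowerWeight_of_eq hgt, heq])]
      exact Finset.mem_insert_self _ _
    · rw [lowerWeight_of_ne het] at hlw
      linarith
  · have hLg := ((mem_I_iff_of_lt (lt_of_le_of_ne (G.LU g) hgt)).1 hy).1
    have hε : 0 < min (ε₀ / 2) ((y - G.L g) / 2) := lt_min (by linarith) (by linarith)
    have hlw := hle _ hε ((min_le_left _ _).trans_lt (by linarith))
    have := min_le_right (ε₀ / 2) ((y - G.L g) / 2)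
    have := L_le_lowerWeight (e := e) hε.le
    rw [lowerWeight_of_ne hgt] at hlw
    linarith

end LimitTrees

theorem compatible_update_update {w : G.E → ℝ} (hw : G.Valid w) {Q : Finset G.E} {f l : G.E}
    {x y : ℝ} (hx : x ∈ G.I f) (hfQ : f ∈ Q → w f = x) (hy : y ∈ G.I l) (hlQ : l ∉ Q) :
    G.Compatible w Q (Function.update (Function.update w f x) l y) := by
  refine ⟨fun e heQ => ?_, fun e => ?_⟩
  · rw [Function.update_of_ne (ne_of_mem_of_not_mem heQ hlQ)]
    rcases eq_or_ne e f with rfl | hef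
    · rw [Function.update_self, hfQ heQ]
    · rw [Function.update_of_ne hef]
  · rcases eq_or_ne e l with rfl | hel
    · rwa [Function.update_self]
    rw [Function.update_of_ne hel]
    rcases eq_or_ne e f with rfl | hef
    · rwa [Function.update_self]
    · rw [Function.update_of_ne hef]
      exact hw e

theorem not_feasible_of_free_edge {w v : G.E → ℝ} {Q T C : Finset G.E} {l : G.E}
    (hT : G.IsSpanningTree T) (hC : G.IsCycle C) (hlC : l ∈ C) (hlT : l ∈ T)
    (hl : G.L l < G.U l) (hv : ∀ y ∈ G.I l, G.Compatible w Q (Function.update v l y))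
    (hcycle : ∀ e ∈ C.erase l, v e < G.U l)
    (hcut : ∀ g, g ≠ l → G.InCut T l g → G.L l < v g) : ¬ G.Feasible w Q := by
  rintro ⟨T', hT'⟩
  obtain ⟨a, ha, ha'⟩ := Finset.exists_between' (insert (G.L l) ((C.erase l).image v)) {G.U l}
    (by simp only [Finset.forall_mem_insert, Finset.forall_mem_image, Finset.mem_singleton,
          forall_eq]; exact ⟨hl, hcycle⟩)
  obtain ⟨b, hb, hb'⟩ := Finset.exists_between' {G.L l}
    (insert (G.U l) ((Finset.univ.filter fun g => g ≠ l ∧ G.InCut T l g).image v))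
    (by simp only [Finset.forall_mem_insert, Finset.forall_mem_image, Finset.mem_singleton,
          forall_eq, Finset.mem_filter, Finset.mem_univ, true_and]
        exact ⟨hl, fun g hg => hcut g hg.1 hg.2⟩)
  simp only [Finset.forall_mem_insert, Finset.forall_mem_image, Finset.mem_singleton,
    forall_eq, Finset.mem_filter, Finset.mem_univ, true_and, Finset.mem_erase] at ha ha' hb hb'
  have hnot := (hT' _ (hv a ((mem_I_iff_of_lt hl).2 ⟨ha.1, ha'⟩))).notMem_of_forall_lt hC hlC
    fun e he hel => by simpa [Function.update_of_ne hel] using ha.2 ⟨hel, he⟩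
  exact hnot <| (hT' _ (hv b ((mem_I_iff_of_lt hl).2 ⟨hb, hb'.1⟩))).mem_of_forall_lt hT hlT
    fun g hgl hg => by simpa [Function.update_of_ne hgl] using hb'.2 ⟨hgl, hg⟩

theorem mem_of_feasible_of_mem_I_inter {w : G.E → ℝ} (hw : G.Valid w) {T : Finset G.E}
    (hT : G.UniqueLimitTrees T) {f l : G.E} {C : Finset G.E} (hC : G.IsCycleOf T f C)
    (hlC : l ∈ C) (hlf : l ≠ f) (hmax : ∀ e ∈ C, e ≠ f → G.U e ≤ G.U l) {Q : Finset G.E}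
    (hQ : G.Feasible w Q) {x : ℝ} (hxf : x ∈ G.I f) (hxl : x ∈ G.I l) (hfQ : f ∈ Q → w f = x) :
    l ∈ Q := by
  have hTsp := hT.1.isSpanningTree
  have hlT : l ∈ T := (Finset.mem_insert.1 (hC.2.2 hlC)).resolve_left hlf
  have hf : f ∉ T := (hC.inCut hTsp hlC hlf).notMem hlf.symm
  have hL : ∀ e ∈ C, e ≠ f → G.L e < x := fun e he hef =>
    L_lt_of_inCut hT.1 hT.2.2.1 ((Finset.mem_insert.1 (hC.2.2 he)).resolve_left hef) hf
      (hC.inCut hTsp he hef) hxf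
  have hl : G.L l < G.U l := by
    by_contra h
    exact (hL l hlC hlf).ne' (eq_L_of_mem_I (le_antisymm (G.LU l) (not_lt.1 h)) hxl)
  have hxl' := (mem_I_iff_of_lt hl).1 hxl
  by_contra hlQ
  refine not_feasible_of_free_edge (v := Function.update w f x) hTsp hC.1 hlC hlT hl
    (fun y hy => compatible_update_update hw hxf hfQ hy hlQ) (fun e he => ?_)
    (fun g hgl hg => ?_) hQ
  · obtain ⟨hel, heC⟩ := Finset.mem_erase.1 he
    rcases eq_or_ne e f with rfl | hef
    · simpa using hxl'.2
    rw [Function.update_of_ne hef]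
    by_cases het : G.L e = G.U e
    · linarith [eq_L_of_mem_I het (hw e), hL e heC hef]
    · exact ((mem_I_iff_of_lt (lt_of_le_of_ne (G.LU e) het)).1 (hw e)).2.trans_le (hmax e heC hef)
  · rcases eq_or_ne g f with rfl | hgf
    · simpa using hxl'.1
    rw [Function.update_of_ne hgf]
    exact L_lt_of_inCut hT.1 hT.2.2.1 hlT (hg.notMem hgl) hg (hw g)

end UncGraph

theorem cycle_witness_set_general
    (G : UncGraph) (w : G.E → ℝ) (hw : G.Valid w)
    (T : Finset G.E) (hT : G.UniqueLimitTrees T)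
    (f : G.E)
    (C : Finset G.E) (hC : G.IsCycleOf T f C)
    (li : G.E) (hli : li ∈ C) (hlif : li ≠ f)
    (hint : (G.I li ∩ G.I f).Nonempty)
    (hmax : ∀ e ∈ C, e ≠ f → G.U e ≤ G.U li) :
    G.IsWitnessSet w {f, li} ∧ (w f ∈ G.I li → G.Mandatory w li) := by
  refine ⟨fun Q hQ => ?_, fun hwf Q hQ =>
    UncGraph.mem_of_feasible_of_mem_I_inter hw hT hC hli hlif hmax hQ (hw f) hwf fun _ => rfl⟩
  by_cases hfQ : f ∈ Q
  · exact ⟨f, Finset.mem_insert_self _ _, hfQ⟩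
  · obtain ⟨x, hxl, hxf⟩ := hint
    exact ⟨li, Finset.mem_insert_of_mem (Finset.mem_singleton_self _),
      UncGraph.mem_of_feasible_of_mem_I_inter hw hT hC hli hlif hmax hQ hxf hxl (absurd · hfQ)⟩

/-- in an instance with unique `T_L = T_U`, for the cycle `C`
closed by an edge `f ∉ T_L`, if `l ∈ C ∖ {f}` has `I_l ∩ I_f ≠ ∅` and the
largest upper limit in `C ∖ {f}`, then `{f, l}` is a witness set; moreover if
`w f ∈ I_l` then `l` is mandatory. -/
theorem cycle_witness_set
    (G : UncGraph) (w : G.E → ℝ) (hw : G.Valid w)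
    (T : Finset G.E) (hT : G.UniqueLimitTrees T)
    (f : G.E) (hf : f ∉ T)
    (C : Finset G.E) (hC : G.IsCycleOf T f C)
    (li : G.E) (hli : li ∈ C) (hlif : li ≠ f)
    (hint : (G.I li ∩ G.I f).Nonempty)
    (hmax : ∀ e ∈ C, e ≠ f → G.U e ≤ G.U li) :
    G.IsWitnessSet w {f, li} ∧ (w f ∈ G.I li → G.Mandatory w li) :=
  cycle_witness_set_general G w hw T hT f C hC li hli hlif hint hmax
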